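/- Fix formal power series e(s) and f_{-1}(s), f_1(s) in x, q, s. For a finite sequence J = (j_1,…,j_n) ∈ {-1,1}^n, define for 1 ≤ k ≤ n+1: a_k = the number of consecutive 1s in J ending at position k−1 (i.e., the length of the maximal run of 1s among j_1,…,j_{k-1} ending at j_{k-1}; a_1 = 0), and b_k = 1 if j_1 = ⋯ = j_{k-1} = 1 and b_k = 0 otherwise. Then the formal power series F(s) := Σ_{n≥0} x^{n+1} Σ_{J∈{-1,1}^n} e(q^{a_{n+1}} s^{b_{n+1}}) ∏_{k=1}^n f_{j_k}(q^{a_k} s^{b_k}) satisfies the functional equation F(s) = x·e(s) + x·f_{-1}(s)·F(1) + x·f_1(s)·F(qs). -/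

import Mathlib

noncomputable section

variable (R : Type*) [CommRing R]

/-- The coefficient ring `R[[q]][s]`: polynomials in `s` over formal power
series in `q`. -/
abbrev QS := Polynomial (PowerSeries R)

/-- Substitution `s ↦ q^a s^b` on the coefficient ring (with `s^0 = 1`). -/
def subAB (a b : ℕ) : QS R →+* QS R :=
  (Polynomial.aeval ((Polynomial.C (PowerSeries.X ^ a) : QS R) * Polynomial.X ^ b)).toRingHom

/-- `a_k` for the word `J` over `{-1,1}` (`true` = 1, `false` = -1), 0-indexed:
the length of the maximal run of 1s among `j_0,…,j_{k-1}` ending at `j_{k-1}`,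
counted as the number of starting positions `i < k` with `J` true on `[i,k)`. -/
def runA (J : ℕ → Bool) (k : ℕ) : ℕ :=
  ((Finset.range k).filter fun i => ∀ j ∈ Finset.Ico i k, J j = true).card

/-- `b_k`: equals `1` if the first `k` entries of `J` are all 1, else `0`. -/
def runB (J : ℕ → Bool) (k : ℕ) : ℕ :=
  if ∀ i < k, J i = true then 1 else 0

/-- Extend a word of length `n` to `ℕ → Bool` by `false`. -/
def extWord (n : ℕ) (J : Fin n → Bool) : ℕ → Bool :=
  fun i => if h : i < n then J ⟨i, h⟩ else false

/-- The explicit series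
`F(s) = Σ_{n≥0} x^{n+1} Σ_{J∈{-1,1}^n} e(q^{a_{n+1}} s^{b_{n+1}}) ∏_{k=1}^n f_{j_k}(q^{a_k} s^{b_k})`. -/
def Fexplicit (e fneg fpos : QS R) : PowerSeries (QS R) :=
  PowerSeries.mk fun m =>
    match m with
    | 0 => 0
    | n + 1 =>
      ∑ J : Fin n → Bool,
        subAB R (runA (extWord n J) n) (runB (extWord n J) n) e *
          ∏ k : Fin n,
            subAB R (runA (extWord n J) k) (runB (extWord n J) k)
              (if J k then fpos else fneg)

/-! Writing `σ_t = subAB (t.toNat) (t.toNat)` (so `σ_false : s ↦ 1`, `σ_true : s ↦ qs`), the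
substitutions attached to a word `t :: J` are those of `J` followed by `σ_t`, because the
substitutions compose as `s ↦ q^a s^b` then `s ↦ q^c s^d` giving `s ↦ q^(a + c b) s^(d b)`.
Hence the summand of a word `t :: J` is `f_t · σ_t` (summand of `J`), and summing over the first
letter splits the coefficient of `x^(n+2)` into the two non-constant terms of the equation. -/

section Substitution

variable {R}

lemma subAB_C (a b : ℕ) (c : PowerSeries R) : subAB R a b (Polynomial.C c) = Polynomial.C c := by
  simp [subAB, Polynomial.algebraMap_eq]

lemma subAB_X (a b : ℕ) :
    subAB R a b Polynomial.X = Polynomial.C (PowerSeries.X ^ a) * Polynomial.X ^ b := by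
  simp [subAB]

lemma subAB_zero_one : subAB R 0 1 = RingHom.id (QS R) := by
  apply Polynomial.ringHom_ext
  · simp [subAB_C]
  · simp [subAB_X]

lemma subAB_comp_subAB (a b c d : ℕ) :
    (subAB R c d).comp (subAB R a b) = subAB R (a + c * b) (d * b) := by
  apply Polynomial.ringHom_ext
  · simp [subAB_C]
  · simp only [RingHom.comp_apply, subAB_X, map_mul, map_pow, subAB_C, mul_pow, pow_add,
      pow_mul]
    ring

end Substitution

lemma runB_succ (T : ℕ → Bool) (k : ℕ) :
    runB T (k + 1) = (T 0).toNat * runB (fun i => T (i + 1)) k := by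
  have hall : (∀ i < k + 1, T i = true) ↔ T 0 = true ∧ ∀ i < k, T (i + 1) = true :=
    ⟨fun h => ⟨h 0 k.succ_pos, fun i hi => h (i + 1) (by omega)⟩,
      fun ⟨h0, h⟩ i hi => by cases i with
        | zero => exact h0
        | succ i => exact h i (by omega)⟩
  simp only [runB, hall]
  cases T 0 <;> simp

lemma runA_succ (T : ℕ → Bool) (k : ℕ) :
    runA T (k + 1) = runA (fun i => T (i + 1)) k + runB T (k + 1) := by
  have hshift (i : ℕ) : (∀ j ∈ Finset.Ico (i + 1) (k + 1), T j = true) ↔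
      ∀ j ∈ Finset.Ico i k, T (j + 1) = true := by
    simp only [Finset.mem_Ico]
    exact ⟨fun h j hj => h (j + 1) (by omega),
      fun h j hj => by simpa [Nat.sub_add_cancel (by omega : 1 ≤ j)] using h (j - 1) (by omega)⟩
  have hstart : (∀ j ∈ Finset.Ico 0 (k + 1), T j = true) ↔ ∀ i < k + 1, T i = true := by
    simp
  simp only [runA, runB, Finset.card_filter, Finset.sum_range_succ', hshift, hstart]

lemma extWord_cons_zero (n : ℕ) (t : Bool) (J : Fin n → Bool) :
    extWord (n + 1) (Fin.cons t J) 0 = t := rfl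

lemma extWord_cons_succ (n : ℕ) (t : Bool) (J : Fin n → Bool) :
    (fun i => extWord (n + 1) (Fin.cons t J) (i + 1)) = extWord n J := by
  funext i
  by_cases hi : i < n
  · simpa [extWord, hi] using Fin.cons_succ (α := fun _ => Bool) t J ⟨i, hi⟩
  · simp [extWord, hi]

section Words

variable {R}

def wordSubst (n : ℕ) (J : Fin n → Bool) (k : ℕ) : QS R →+* QS R :=
  subAB R (runA (extWord n J) k) (runB (extWord n J) k)

lemma wordSubst_cons_succ (n : ℕ) (t : Bool) (J : Fin n → Bool) (k : ℕ) :
    wordSubst (n + 1) (Fin.cons t J) (k + 1)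
      = (subAB R t.toNat t.toNat).comp (wordSubst n J k) := by
  rw [wordSubst, wordSubst, runA_succ, runB_succ, extWord_cons_zero, extWord_cons_succ,
    subAB_comp_subAB]

lemma wordSubst_zero (n : ℕ) (J : Fin n → Bool) : wordSubst n J 0 = RingHom.id (QS R) := by
  simpa [wordSubst, runA, runB] using subAB_zero_one

def wordTerm (e fneg fpos : QS R) (n : ℕ) (J : Fin n → Bool) : QS R :=
  wordSubst n J n e * ∏ k : Fin n, wordSubst n J k (if J k then fpos else fneg)

lemma wordTerm_cons (e fneg fpos : QS R) (n : ℕ) (t : Bool) (J : Fin n → Bool) :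
    wordTerm e fneg fpos (n + 1) (Fin.cons t J)
      = (if t then fpos else fneg) * subAB R t.toNat t.toNat (wordTerm e fneg fpos n J) := by
  simp only [wordTerm, Fin.prod_univ_succ, Fin.cons_zero, Fin.cons_succ, Fin.val_zero,
    Fin.val_succ, wordSubst_zero, wordSubst_cons_succ, RingHom.id_apply, RingHom.comp_apply,
    map_mul, map_prod]
  ring

lemma sum_wordTerm_succ (e fneg fpos : QS R) (n : ℕ) :
    ∑ J : Fin (n + 1) → Bool, wordTerm e fneg fpos (n + 1) J
      = fneg * subAB R 0 0 (∑ J : Fin n → Bool, wordTerm e fneg fpos n J)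
        + fpos * subAB R 1 1 (∑ J : Fin n → Bool, wordTerm e fneg fpos n J) := by
  rw [← (Fin.consEquiv fun _ => Bool).sum_comp, Fintype.sum_prod_type, Fintype.sum_bool,
    add_comm]
  simp [Fin.consEquiv, wordTerm_cons, Finset.mul_sum, map_sum]

lemma coeff_succ_Fexplicit (e fneg fpos : QS R) (n : ℕ) :
    PowerSeries.coeff (n + 1) (Fexplicit R e fneg fpos)
      = ∑ J : Fin n → Bool, wordTerm e fneg fpos n J := by
  simp [Fexplicit, wordTerm, wordSubst]

end Words

/-- The explicit series satisfies the functional equation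
`F(s) = x·e(s) + x·f_{-1}(s)·F(1) + x·f_1(s)·F(qs)`. -/
theorem Fexplicit_functional_equation (e fneg fpos : QS R) :
    Fexplicit R e fneg fpos
      = PowerSeries.X * PowerSeries.C e
      + PowerSeries.X * PowerSeries.C fneg
          * PowerSeries.map (subAB R 0 0) (Fexplicit R e fneg fpos)
      + PowerSeries.X * PowerSeries.C fpos
          * PowerSeries.map (subAB R 1 1) (Fexplicit R e fneg fpos) := by
  refine PowerSeries.ext fun m => ?_
  rcases m with _ | _ | n
  · simp [Fexplicit]
  · rw [coeff_succ_Fexplicit, Fintype.sum_unique]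
    simp [wordTerm, wordSubst_zero, mul_assoc, PowerSeries.coeff_succ_X_mul, Fexplicit]
  · simp only [map_add, mul_assoc, PowerSeries.coeff_succ_X_mul, PowerSeries.coeff_C_mul,
      PowerSeries.coeff_map, PowerSeries.coeff_C, coeff_succ_Fexplicit, sum_wordTerm_succ]
    simp

end
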